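/- For every n ≥ 3 there exist n − 2 pairwise distinct nondecreasing n-tuples (x_1^{(h)}, …, x_n^{(h)}) of positive integers, 1 ≤ h ≤ n−2, such that for each h one has x_1^{(h)} = x_2^{(h)} = x_3^{(h)} = 2 and Σ_{1≤i<j≤n} 1/(x_i^{(h)} x_j^{(h)}) = 1 − 1/L_h, where L_h is the least common multiple of the pairwise products x_i^{(h)} x_j^{(h)} over all 1 ≤ i < j ≤ n. -/

import Mathlib

/-!
Start from `(2, 2, 2)`, where `Σ 1/(xᵢxⱼ) = 3/4 = 1 - 1/4`, and extend a solution `x` by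
`y = m + d`, where `L` is the lcm of the pairwise products and `m = Σₜ L / xₜ`. Appending `y`
adds `m / (L y)` to the sum, which becomes `1 - d / (L y)`; so it suffices that the new lcm `L'`
satisfies `d L' = L y`. Every `gcd(xᵢ, xⱼ)` divides `m`, hence for `d = 1` it is coprime to `y`,
and then `lcm(xᵢy, xⱼy, xᵢxⱼ) = xᵢxⱼy`. For `d = 2`, allowed while all entries after the
leading `2, 2, 2` are odd, only pairs of leading `2`s lose coprimality, and the factor `d`
absorbs them. Since `m` is even, the entries appended with `d = 1` are odd. Taking `d = 2` at
step `h` and `d = 1` at all other steps thus gives `n - 2` tuples, told apart by the position of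
their even entry after the leading `2`s, if any.
-/

open Finset

theorem Nat.mul_mul_dvd_of_coprime_gcd {a b y c : ℕ} (hy : y.Coprime (a.gcd b))
    (ha : a * y ∣ c) (hb : b * y ∣ c) (hab : a * b ∣ c) : a * b * y ∣ c := by
  have hly : a.lcm b * y ∣ c := Nat.lcm_mul_right a y b ▸ Nat.lcm_dvd ha hb
  have hlg : a.lcm b * a.gcd b ∣ c := by rwa [mul_comm, Nat.gcd_mul_lcm]
  have := Nat.lcm_dvd hly hlg
  rw [Nat.lcm_mul_left, hy.lcm_eq_mul] at this
  rwa [← Nat.gcd_mul_lcm a b, mul_comm (a.gcd b), mul_assoc, mul_comm (a.gcd b)]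

theorem Finset.lcm_mul_right_of_nonempty {ι : Type*} {s : Finset ι} (hs : s.Nonempty)
    (f : ι → ℕ) (a : ℕ) : (s.lcm fun i => f i * a) = s.lcm f * a := by
  classical
  induction hs using Nonempty.cons_induction with
  | singleton => simp
  | cons i s hi hs ih =>
    rw [cons_eq_insert, lcm_insert, lcm_insert, ih]
    exact Nat.lcm_mul_right _ _ _

variable {k : ℕ}

theorem Monotone.fin_snoc {β : Type*} [Preorder β] {x : Fin k → β} {y : β} (hx : Monotone x)
    (hy : ∀ i, x i ≤ y) : Monotone (Fin.snoc (α := fun _ => β) x y) := by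
  intro a b hab
  induction b using Fin.lastCases with
  | last => induction a using Fin.lastCases <;> simp [hy]
  | cast j =>
    induction a using Fin.lastCases with
    | last => exact absurd hab (Fin.castSucc_lt_last j).not_ge
    | cast i => simpa using hx (Fin.castSucc_le_castSucc_iff.1 hab)

def ltPairs (k : ℕ) : Finset (Fin k × Fin k) := univ.filter fun p => p.1 < p.2

theorem ltPairs_succ (k : ℕ) :
    ltPairs (k + 1) = (ltPairs k).map (Fin.castSuccEmb.prodMap Fin.castSuccEmb) ∪
      univ.map (Fin.castSuccEmb.trans (Function.Embedding.sectL _ (Fin.last k))) := by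
  ext ⟨i, j⟩
  induction j using Fin.lastCases <;> induction i using Fin.lastCases <;>
    simp [ltPairs, Fin.castSucc_lt_last, Fin.le_last, eq_comm (a := Fin.last k)]

theorem disjoint_ltPairs_succ (k : ℕ) :
    Disjoint ((ltPairs k).map (Fin.castSuccEmb.prodMap Fin.castSuccEmb))
      (univ.map (Fin.castSuccEmb.trans (Function.Embedding.sectL _ (Fin.last k)))) := by
  simp only [disjoint_left, mem_map, Prod.exists]
  rintro _ ⟨i, j, -, rfl⟩ ⟨l, -, h⟩
  exact Fin.castSucc_ne_last j (congrArg Prod.snd h).symm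

section Snoc

variable {α : Type*} (x : Fin k → α) (y : α)

theorem sum_ltPairs_snoc {M : Type*} [AddCommMonoid M] (f : α → α → M) :
    ∑ p ∈ ltPairs (k + 1),
        f (Fin.snoc (α := fun _ => α) x y p.1) (Fin.snoc (α := fun _ => α) x y p.2) =
      ∑ p ∈ ltPairs k, f (x p.1) (x p.2) + ∑ i, f (x i) y := by
  rw [ltPairs_succ, sum_union (disjoint_ltPairs_succ k), sum_map, sum_map]
  simp

theorem forall_ltPairs_snoc (P : α → α → Prop) :
    (∀ p ∈ ltPairs (k + 1),
        P (Fin.snoc (α := fun _ => α) x y p.1) (Fin.snoc (α := fun _ => α) x y p.2)) ↔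
      (∀ p ∈ ltPairs k, P (x p.1) (x p.2)) ∧ ∀ i, P (x i) y := by
  simp only [ltPairs_succ, forall_mem_union, forall_mem_map]
  simp

end Snoc

def pairRecipSum (x : Fin k → ℕ) : ℚ := ∑ p ∈ ltPairs k, 1 / ((x p.1 : ℚ) * x p.2)

def pairLcm (x : Fin k → ℕ) : ℕ := (ltPairs k).lcm fun p => x p.1 * x p.2

def cofactorSum (x : Fin k → ℕ) : ℕ := ∑ t, pairLcm x / x t

section PairLcm

variable (x : Fin k → ℕ)

theorem mul_dvd_pairLcm {i j : Fin k} (hij : i ≠ j) : x i * x j ∣ pairLcm x := by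
  rcases hij.lt_or_gt with h | h
  · exact dvd_lcm (s := ltPairs k) (b := (i, j)) (by simpa [ltPairs])
  · exact mul_comm (x j) (x i) ▸ dvd_lcm (s := ltPairs k) (b := (j, i)) (by simpa [ltPairs])

theorem dvd_pairLcm (hk : 2 ≤ k) (t : Fin k) : x t ∣ pairLcm x := by
  obtain ⟨s, hs⟩ : ∃ s : Fin k, s ≠ t :=
    if h : (t : ℕ) = 0 then ⟨⟨1, hk⟩, fun e => by simp [← e] at h⟩
    else ⟨⟨0, by omega⟩, fun e => h (by simp [← e])⟩
  exact (Dvd.intro _ rfl).trans (mul_dvd_pairLcm x hs.symm)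

theorem pairLcm_pos (hx : ∀ i, 0 < x i) : 0 < pairLcm x :=
  Nat.pos_of_ne_zero <| lcm_ne_zero_iff.2 fun p _ => (Nat.mul_pos (hx p.1) (hx p.2)).ne'

theorem gcd_dvd_cofactorSum {i j : Fin k} (hij : i ≠ j) :
    (x i).gcd (x j) ∣ cofactorSum x := by
  refine dvd_sum fun t _ => ?_
  rcases eq_or_ne t i with rfl | hti
  · exact (Nat.gcd_dvd_right _ _).trans (Nat.dvd_div_of_mul_dvd (mul_dvd_pairLcm x hij))
  · exact (Nat.gcd_dvd_left _ _).trans (Nat.dvd_div_of_mul_dvd (mul_dvd_pairLcm x hti))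

theorem pairRecipSum_snoc (y : ℕ) :
    pairRecipSum (Fin.snoc (α := fun _ => ℕ) x y) =
      pairRecipSum x + ∑ i, 1 / ((x i : ℚ) * y) :=
  sum_ltPairs_snoc x y fun a b : ℕ => 1 / ((a : ℚ) * b)

theorem sum_one_div_mul_eq_cofactorSum_div (hx : ∀ i, 0 < x i) (hk : 2 ≤ k) (y : ℕ) :
    ∑ i, 1 / ((x i : ℚ) * y) = cofactorSum x / (pairLcm x * y) := by
  have hL : (pairLcm x : ℚ) ≠ 0 := by exact_mod_cast (pairLcm_pos x hx).ne'
  simp only [cofactorSum, Nat.cast_sum, sum_div]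
  refine sum_congr rfl fun t _ => ?_
  rw [Nat.cast_div (dvd_pairLcm x hk t) (by exact_mod_cast (hx t).ne')]
  field_simp

theorem mul_pairLcm_snoc {d y : ℕ} (hk : 2 ≤ k) (hdy : d ∣ y)
    (hdx : ∀ i, d * x i ∣ pairLcm x)
    (hpairs : ∀ i j : Fin k, i < j → y.Coprime ((x i).gcd (x j)) ∨ x j ∣ d) :
    d * pairLcm (Fin.snoc (α := fun _ => ℕ) x y) = pairLcm x * y := by
  set L' := pairLcm (Fin.snoc (α := fun _ => ℕ) x y)
  obtain ⟨hxx, hxy⟩ := (forall_ltPairs_snoc x y (· * · ∣ L')).1 fun p hp => dvd_lcm hp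
  apply Nat.dvd_antisymm
  · obtain ⟨y', rfl⟩ := hdy
    have hL' : L' ∣ pairLcm x * y' := by
      refine lcm_dvd_iff.2 <|
        (forall_ltPairs_snoc x _ (· * · ∣ _)).2 ⟨fun p hp => ?_, fun i => ?_⟩
      · exact (dvd_lcm hp).trans (dvd_mul_right _ _)
      · simpa [mul_left_comm, mul_assoc] using mul_dvd_mul_right (hdx i) y'
    rw [mul_left_comm]
    exact mul_dvd_mul_left d hL'
  · have hne : (ltPairs k).Nonempty :=
      ⟨(⟨0, by omega⟩, ⟨1, by omega⟩), by simp [ltPairs]⟩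
    rw [pairLcm, ← lcm_mul_right_of_nonempty hne]
    refine lcm_dvd fun p hp => ?_
    rcases hpairs p.1 p.2 (mem_filter.1 hp).2 with hcop | hjd
    · exact (Nat.mul_mul_dvd_of_coprime_gcd hcop (hxy _) (hxy _) (hxx p hp)).trans
        (dvd_mul_left _ _)
    · calc x p.1 * x p.2 * y ∣ d * (x p.1 * y) := by
            rw [mul_left_comm, mul_assoc]
            exact mul_dvd_mul_left _ (mul_dvd_mul_right hjd _)
        _ ∣ d * L' := mul_dvd_mul_left d (hxy _)

theorem pairRecipSum_snoc_eq_one_sub {d : ℕ} (hx : ∀ i, 0 < x i) (hk : 2 ≤ k) (hd : 0 < d)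
    (heq : pairRecipSum x = 1 - 1 / pairLcm x)
    (hlcm : d * pairLcm (Fin.snoc (α := fun _ => ℕ) x (cofactorSum x + d)) =
      pairLcm x * (cofactorSum x + d)) :
    pairRecipSum (Fin.snoc (α := fun _ => ℕ) x (cofactorSum x + d)) =
      1 - 1 / pairLcm (Fin.snoc (α := fun _ => ℕ) x (cofactorSum x + d)) := by
  have hL : (pairLcm x : ℚ) ≠ 0 := by exact_mod_cast (pairLcm_pos x hx).ne'
  have hL' : (pairLcm (Fin.snoc (α := fun _ => ℕ) x (cofactorSum x + d)) : ℚ) ≠ 0 := by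
    have : d * pairLcm (Fin.snoc (α := fun _ => ℕ) x (cofactorSum x + d)) ≠ 0 := by
      rw [hlcm]; exact mul_ne_zero (pairLcm_pos x hx).ne' (by omega)
    exact_mod_cast right_ne_zero_of_mul this
  have hlcmQ : (d : ℚ) * pairLcm (Fin.snoc (α := fun _ => ℕ) x (cofactorSum x + d)) =
      pairLcm x * (cofactorSum x + d) := by exact_mod_cast hlcm
  rw [pairRecipSum_snoc, heq, sum_one_div_mul_eq_cofactorSum_div x hx hk]
  field_simp
  push_cast
  linear_combination -hlcmQ

end PairLcm

theorem two_dvd_cofactorSum {x : Fin (k + 2) → ℕ} (h0 : x 0 = 2) (h1 : x 1 = 2) :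
    2 ∣ cofactorSum x := by
  simpa [h0, h1] using gcd_dvd_cofactorSum x (i := 0) (j := 1) (by simp)

structure IsSolution (x : Fin (k + 3) → ℕ) : Prop where
  pos : ∀ i, 0 < x i
  mono : Monotone x
  eq_two : ∀ i : Fin (k + 3), (i : ℕ) < 3 → x i = 2
  pairRecipSum_eq : pairRecipSum x = 1 - 1 / pairLcm x

theorem isSolution_const_two : IsSolution (fun _ : Fin 3 => 2) where
  pos _ := two_pos
  mono := monotone_const
  eq_two _ _ := rfl
  pairRecipSum_eq := by
    have hL : pairLcm (fun _ : Fin 3 => 2) = 4 := by decide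
    have hcard : (ltPairs 3).card = 3 := by decide
    simp [pairRecipSum, hL, hcard]
    norm_num

theorem IsSolution.snoc {x : Fin (k + 3) → ℕ} (hx : IsSolution x) {d : ℕ} (hd0 : 0 < d)
    (hd2 : d ∣ 2) (hpairs : ∀ i j, i < j → d.Coprime ((x i).gcd (x j)) ∨ x j ∣ d) :
    IsSolution (Fin.snoc (α := fun _ => ℕ) x (cofactorSum x + d)) := by
  have h0 : x 0 = 2 := hx.eq_two 0 (by simp)
  have h1 : x 1 = 2 := hx.eq_two 1 (by simp)
  have hm : 2 ∣ cofactorSum x := two_dvd_cofactorSum h0 h1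
  have hdx : ∀ i, 2 * x i ∣ pairLcm x := fun i => by
    rcases eq_or_ne 0 i with rfl | hi
    · simpa [h0, h1] using mul_dvd_pairLcm x (i := 0) (j := 1) (by simp)
    · simpa [h0] using mul_dvd_pairLcm x hi
  have hle : ∀ i, x i ≤ cofactorSum x := fun i =>
    calc x i ≤ pairLcm x / x 0 := by
          rw [h0, Nat.le_div_iff_mul_le two_pos, mul_comm]
          exact Nat.le_of_dvd (pairLcm_pos x hx.pos) (hdx i)
      _ ≤ cofactorSum x := single_le_sum (f := fun t => pairLcm x / x t) (by simp) (mem_univ 0)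
  refine ⟨?_, hx.mono.fin_snoc fun i => (hle i).trans (Nat.le_add_right _ _), ?_, ?_⟩
  · exact Fin.lastCases (by simpa using by omega) (by simpa using hx.pos)
  · intro i hi
    obtain ⟨j, rfl⟩ : ∃ j : Fin (k + 3), j.castSucc = i := ⟨⟨i, by omega⟩, rfl⟩
    simpa using hx.eq_two j hi
  · refine pairRecipSum_snoc_eq_one_sub x hx.pos (by omega) hd0 hx.pairRecipSum_eq ?_
    refine mul_pairLcm_snoc x (by omega) (dvd_add (hd2.trans hm) dvd_rfl)
      (fun i => (mul_dvd_mul_right hd2 _).trans (hdx i)) fun i j hij => ?_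
    refine (hpairs i j hij).imp_left fun h => ?_
    obtain ⟨c, hc⟩ := gcd_dvd_cofactorSum x hij.ne
    rwa [hc, add_comm, mul_comm, Nat.coprime_add_mul_right_left]

def solutionTuple (h : ℕ) : (k : ℕ) → Fin (k + 3) → ℕ
  | 0 => fun _ => 2
  | k + 1 =>
    Fin.snoc (solutionTuple h k) (cofactorSum (solutionTuple h k) + if k = h then 2 else 1)

theorem solutionTuple_of_lt_three (h : ℕ) :
    ∀ k (i : Fin (k + 3)), (i : ℕ) < 3 → solutionTuple h k i = 2
  | 0, _, _ => rfl
  | k + 1, i, hi => by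
    obtain ⟨j, rfl⟩ : ∃ j : Fin (k + 3), j.castSucc = i := ⟨⟨i, by omega⟩, rfl⟩
    simpa [solutionTuple] using solutionTuple_of_lt_three h k j hi

theorem even_solutionTuple_iff (h : ℕ) :
    ∀ k (i : Fin (k + 3)), 3 ≤ (i : ℕ) → (Even (solutionTuple h k i) ↔ (i : ℕ) = h + 3)
  | 0, i, hi => by omega
  | k + 1, i, hi => by
    induction i using Fin.lastCases with
    | cast j => simpa [solutionTuple] using even_solutionTuple_iff h k j hi
    | last =>
      have hm := two_dvd_cofactorSum (solutionTuple_of_lt_three h k 0 (by simp))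
        (solutionTuple_of_lt_three h k 1 (by simp))
      simp only [solutionTuple, Fin.snoc_last, Fin.val_last, Nat.even_add, even_iff_two_dvd.2 hm]
      split_ifs <;> simp [*]

theorem isSolution_solutionTuple (h : ℕ) : ∀ k, IsSolution (solutionTuple h k)
  | 0 => isSolution_const_two
  | k + 1 => by
    have hx := isSolution_solutionTuple h k
    refine hx.snoc (by positivity) (by split_ifs <;> norm_num) fun i j hij => ?_
    split_ifs with hk
    · by_cases hj : (j : ℕ) < 3
      · exact .inr (hx.eq_two j hj).dvd
      · refine .inl (Nat.coprime_two_left.2 (Odd.of_dvd_nat ?_ (Nat.gcd_dvd_right _ _)))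
        rw [← Nat.not_even_iff_odd, even_solutionTuple_iff h k j (by omega)]
        omega
    · exact .inl (Nat.coprime_one_left _)

theorem solutionTuple_injOn (k : ℕ) : Set.InjOn (fun h => solutionTuple h k) (Set.Iic k) := by
  intro a ha b hb hab
  by_contra hne
  wlog hlt : a < b generalizing a b
  · exact this hb ha hab.symm (Ne.symm hne) (by omega)
  have hbk : b ≤ k := hb
  have hi := even_solutionTuple_iff a k ⟨a + 3, by omega⟩ le_add_self
  rw [show solutionTuple a k = solutionTuple b k from hab,
    even_solutionTuple_iff b k _ le_add_self] at hi
  exact hne (by simpa using hi)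

/-- For every `n ≥ 3` there exist `n − 2` pairwise distinct nondecreasing `n`-tuples of
positive integers, each starting with `2, 2, 2`, such that each tuple satisfies
`Σ_{1≤i<j≤n} 1/(x_i x_j) = 1 − 1/L`, where `L` is the least common multiple of the
pairwise products `x_i x_j` over `1 ≤ i < j ≤ n`. -/
theorem stmt17 (n : ℕ) (hn : 3 ≤ n) :
    ∃ X : Fin (n - 2) → Fin n → ℕ,
      Function.Injective X ∧
      ∀ h : Fin (n - 2),
        (∀ i, 0 < X h i) ∧ Monotone (X h) ∧
        X h ⟨0, by omega⟩ = 2 ∧ X h ⟨1, by omega⟩ = 2 ∧ X h ⟨2, by omega⟩ = 2 ∧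
        ∑ p ∈ Finset.univ.filter (fun p : Fin n × Fin n => p.1 < p.2),
            (1 : ℚ) / (X h p.1 * X h p.2) =
          1 - 1 / ((Finset.univ.filter (fun p : Fin n × Fin n => p.1 < p.2)).lcm
              (fun p => X h p.1 * X h p.2) : ℕ) := by
  obtain ⟨k, rfl⟩ : ∃ k, n = k + 3 := ⟨n - 3, by omega⟩
  have hle (h : Fin (k + 3 - 2)) : (h : ℕ) ∈ Set.Iic k := Nat.le_of_lt_succ h.isLt
  refine ⟨fun h => solutionTuple h k,
    fun a b hab => Fin.ext (solutionTuple_injOn k (hle a) (hle b) hab), fun h => ?_⟩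
  have hx := isSolution_solutionTuple h k
  exact ⟨hx.pos, hx.mono, hx.eq_two _ (by simp), hx.eq_two _ (by simp), hx.eq_two _ (by simp),
    hx.pairRecipSum_eq⟩
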